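/- Let q be an odd prime with q ≡ 1 (mod 5) or q ≡ −1 (mod 5). Then L_{(q−1)/2}² ≡ 2 + 2·(−1)^{(q−1)/2} (mod q²), where L_n is the n-th Lucas number. -/

import Mathlib

/-!
Write `n = (q - 1) / 2`. Since `5` is a square mod `q`, the polynomial `X² - X - 1` has a root `x`
in `ZMod q`, and Binet's formula together with Fermat's little theorem gives
`L_{2n} = x^{q-1} + (1-x)^{q-1} ≡ 2 (mod q)`. Now `L_n² = L_{2n} + 2(-1)^n` and
`5 F_n² = L_{2n} - 2(-1)^n`. For odd `n` the first identity gives `q ∣ L_n`, so both sides of the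
claim vanish mod `q²`; for even `n` the second gives `q ∣ F_n`, and then `L_n² - 4 = 5 F_n²` is
divisible by `q²`.
-/

/-- The Lucas numbers: `L_0 = 2`, `L_1 = 1`, `L_i = L_{i-1} + L_{i-2}`. -/
def lucasNum : ℕ → ℤ
  | 0 => 2
  | 1 => 1
  | n + 2 => lucasNum (n + 1) + lucasNum n

lemma lucasNum_add_two (n : ℕ) : lucasNum (n + 2) = lucasNum (n + 1) + lucasNum n := rfl

section Binet

variable {R : Type*} [CommRing R] {x : R}

lemma pow_add_two_of_sq_eq_add_one (hx : x ^ 2 = x + 1) (n : ℕ) :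
    x ^ (n + 2) = x ^ (n + 1) + x ^ n := by
  linear_combination x ^ n * hx

lemma one_sub_sq_of_sq_eq_add_one (hx : x ^ 2 = x + 1) : (1 - x) ^ 2 = (1 - x) + 1 := by
  linear_combination hx

lemma mul_one_sub_of_sq_eq_add_one (hx : x ^ 2 = x + 1) : x * (1 - x) = -1 := by
  linear_combination -hx

theorem lucasNum_cast_eq_pow_add_pow (hx : x ^ 2 = x + 1) (n : ℕ) :
    (lucasNum n : R) = x ^ n + (1 - x) ^ n := by
  induction n using Nat.twoStepInduction with
  | zero => norm_num [lucasNum]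
  | one => norm_num [lucasNum]
  | more n ih₁ ih₂ =>
    rw [lucasNum_add_two, Int.cast_add, ih₁, ih₂, pow_add_two_of_sq_eq_add_one hx,
      pow_add_two_of_sq_eq_add_one (one_sub_sq_of_sq_eq_add_one hx)]
    ring

theorem fib_cast_mul_eq_pow_sub_pow (hx : x ^ 2 = x + 1) (n : ℕ) :
    (Nat.fib n : R) * (2 * x - 1) = x ^ n - (1 - x) ^ n := by
  induction n using Nat.twoStepInduction with
  | zero => simp
  | one => simp; ring
  | more n ih₁ ih₂ =>
    rw [Nat.fib_add_two, Nat.cast_add, pow_add_two_of_sq_eq_add_one hx,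
      pow_add_two_of_sq_eq_add_one (one_sub_sq_of_sq_eq_add_one hx)]
    linear_combination ih₁ + ih₂

lemma lucasNum_cast_sq (hx : x ^ 2 = x + 1) (n : ℕ) :
    (lucasNum n : R) ^ 2 = lucasNum (2 * n) + 2 * (-1) ^ n := by
  have hxy : x ^ n * (1 - x) ^ n = (-1) ^ n := by rw [← mul_pow, mul_one_sub_of_sq_eq_add_one hx]
  rw [lucasNum_cast_eq_pow_add_pow hx, lucasNum_cast_eq_pow_add_pow hx]
  linear_combination 2 * hxy

lemma five_mul_fib_cast_sq (hx : x ^ 2 = x + 1) (n : ℕ) :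
    5 * (Nat.fib n : R) ^ 2 = lucasNum (2 * n) - 2 * (-1) ^ n := by
  have hxy : x ^ n * (1 - x) ^ n = (-1) ^ n := by rw [← mul_pow, mul_one_sub_of_sq_eq_add_one hx]
  have h5 : (2 * x - 1) ^ 2 = 5 := by linear_combination 4 * hx
  calc 5 * (Nat.fib n : R) ^ 2 = (Nat.fib n * (2 * x - 1)) ^ 2 := by rw [mul_pow, h5, mul_comm]
    _ = (x ^ n - (1 - x) ^ n) ^ 2 := by rw [fib_cast_mul_eq_pow_sub_pow hx]
    _ = lucasNum (2 * n) - 2 * (-1) ^ n := by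
      rw [lucasNum_cast_eq_pow_add_pow hx]
      linear_combination -2 * hxy

end Binet

lemma lucasNum_sq (n : ℕ) : lucasNum n ^ 2 = lucasNum (2 * n) + 2 * (-1) ^ n := by
  exact_mod_cast lucasNum_cast_sq Real.goldenRatio_sq n

lemma five_mul_fib_sq (n : ℕ) : 5 * (Nat.fib n : ℤ) ^ 2 = lucasNum (2 * n) - 2 * (-1) ^ n := by
  exact_mod_cast five_mul_fib_cast_sq Real.goldenRatio_sq n

theorem lucasNum_sq_modEq_of_lucasNum_two_mul_modEq {q : ℕ} (hq : q.Prime) (hq5 : q ≠ 5)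
    {n : ℕ} (h : lucasNum (2 * n) ≡ 2 [ZMOD q]) :
    lucasNum n ^ 2 ≡ 2 + 2 * (-1) ^ n [ZMOD (q : ℤ) ^ 2] := by
  have hq' : Prime (q : ℤ) := Nat.prime_iff_prime_int.mp hq
  have hdvd : (q : ℤ) ∣ lucasNum (2 * n) - 2 := h.symm.dvd
  rcases n.even_or_odd with hn | hn
  · have hF : (q : ℤ) ∣ 5 * (Nat.fib n : ℤ) ^ 2 := by
      rwa [five_mul_fib_sq, hn.neg_one_pow, mul_one]
    have h5 : ¬(q : ℤ) ∣ 5 := by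
      exact_mod_cast (Nat.prime_dvd_prime_iff_eq hq Nat.prime_five).not.mpr hq5
    have hqF : (q : ℤ) ∣ Nat.fib n := hq'.dvd_of_dvd_pow ((hq'.dvd_or_dvd hF).resolve_left h5)
    have hdiff : lucasNum n ^ 2 - (2 + 2 * (-1) ^ n) = 5 * (Nat.fib n : ℤ) ^ 2 := by
      linear_combination lucasNum_sq n - five_mul_fib_sq n + 2 * hn.neg_one_pow (α := ℤ)
    exact (Int.modEq_iff_dvd.mpr (hdiff ▸ (pow_dvd_pow_of_dvd hqF 2).mul_left 5)).symm
  · have hL : (q : ℤ) ∣ lucasNum n ^ 2 := by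
      rwa [lucasNum_sq, hn.neg_one_pow, mul_neg_one, ← sub_eq_add_neg]
    rw [hn.neg_one_pow, mul_neg_one, add_neg_cancel]
    exact Int.modEq_zero_iff_dvd.mpr (pow_dvd_pow_of_dvd (hq'.dvd_of_dvd_pow hL) 2)

lemma exists_sq_eq_add_one_of_isSquare_five {K : Type*} [Field K] (h2 : (2 : K) ≠ 0)
    (h5 : IsSquare (5 : K)) : ∃ x : K, x ^ 2 = x + 1 := by
  obtain ⟨α, hα⟩ := h5
  exact ⟨(1 + α) / 2, by field_simp; linear_combination -hα⟩

lemma isSquare_five_zmod_of_modEq {q : ℕ} [Fact q.Prime] (hq2 : q ≠ 2)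
    (h : (q : ℤ) ≡ 1 [ZMOD 5] ∨ (q : ℤ) ≡ -1 [ZMOD 5]) : IsSquare (5 : ZMod q) := by
  have : Fact (Nat.Prime 5) := ⟨Nat.prime_five⟩
  have hrec := ZMod.exists_sq_eq_prime_iff_of_mod_four_eq_one (p := 5) (q := q) rfl hq2
  rw [Nat.cast_ofNat] at hrec
  rw [← hrec]
  rcases h with h | h <;> have h' := (ZMod.intCast_eq_intCast_iff _ _ 5).mpr h <;>
    push_cast at h' <;> rw [h']
  exacts [IsSquare.one, ⟨2, rfl⟩]

theorem lucasNum_sub_one_modEq_two {q : ℕ} [Fact q.Prime] (hq2 : q ≠ 2)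
    (h5 : IsSquare (5 : ZMod q)) : lucasNum (q - 1) ≡ 2 [ZMOD q] := by
  have h2 : (2 : ZMod q) ≠ 0 := Ring.two_ne_zero (by rwa [ZMod.ringChar_zmod_n])
  obtain ⟨x, hx⟩ := exists_sq_eq_add_one_of_isSquare_five h2 h5
  have hxy : x * (1 - x) ≠ 0 := by
    rw [mul_one_sub_of_sq_eq_add_one hx]
    exact neg_ne_zero.mpr one_ne_zero
  rw [← ZMod.intCast_eq_intCast_iff, lucasNum_cast_eq_pow_add_pow hx,
    ZMod.pow_card_sub_one_eq_one (left_ne_zero_of_mul hxy),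
    ZMod.pow_card_sub_one_eq_one (right_ne_zero_of_mul hxy)]
  norm_num

/-- **(20).** If `q` is an odd prime with `q ≡ ±1 (mod 5)`, then
`L_{(q-1)/2}² ≡ 2 + 2·(-1)^{(q-1)/2} (mod q²)`. -/
theorem lucasNum_half_sq_congr (q : ℕ) (hq : q.Prime) (hodd : Odd q)
    (h5 : (q : ℤ) ≡ 1 [ZMOD 5] ∨ (q : ℤ) ≡ -1 [ZMOD 5]) :
    lucasNum ((q - 1) / 2) ^ 2 ≡ 2 + 2 * (-1 : ℤ) ^ ((q - 1) / 2)
      [ZMOD (q : ℤ) ^ 2] := by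
  have : Fact q.Prime := ⟨hq⟩
  have hq2 : q ≠ 2 := by rintro rfl; exact absurd hodd (by decide)
  have hq5 : q ≠ 5 := by rintro rfl; rcases h5 with h | h <;> revert h <;> decide
  have h2n : 2 * ((q - 1) / 2) = q - 1 := by obtain ⟨m, rfl⟩ := hodd; omega
  refine lucasNum_sq_modEq_of_lucasNum_two_mul_modEq hq hq5 ?_
  rw [h2n]
  exact lucasNum_sub_one_modEq_two hq2 (isSquare_five_zmod_of_modEq hq2 h5)
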